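/- arXiv:math/0405340 — 2 statements merged into one kernel-verified Lean document; each statement's English description precedes it below -/
import Mathlib

section
/- Fix α ∈ (0,1) and k ∈ ℕ, and let φ₁,…,φ_k : (0,∞) → [0,∞) be functions each of which is either (i) such that φ_i(Cx) ≤ C^α φ_i(x) for all x > 0 and all C > 1, or (ii) non-increasing on (0,∞). Suppose each equation u = φ_i(u) has a largest solution u_i > 0, and the equation u = Σ_{i=1}^k φ_i(u) has a largest solution u*. Then there exists a constant C (depending only on k and α) such that u* ≤ C · Σ_{i=1}^k u_i. -/
open Set

noncomputable section

/-- Fix `α ∈ (0,1)` and `k`. There is a constant `C` depending only on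
`k` and `α` such that: for any functions `φ₁, …, φ_k : (0,∞) → [0,∞)`, each of which
either satisfies `φᵢ(Cx) ≤ C^α φᵢ(x)` for all `x > 0`, `C > 1`, or is non-increasing on
`(0,∞)`, if `uᵢ > 0` is the largest solution of `u = φᵢ(u)` and `u*` is the largest
solution of `u = ∑ᵢ φᵢ(u)`, then `u* ≤ C ∑ᵢ uᵢ`. -/
theorem largest_fixed_point_of_sum_le
    (α : ℝ) (hα : α ∈ Ioo (0 : ℝ) 1) (k : ℕ) :
    ∃ C : ℝ, 0 < C ∧
      ∀ φ : Fin k → ℝ → ℝ,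
        (∀ i, ∀ x : ℝ, 0 < x → 0 ≤ φ i x) →
        (∀ i, (∀ x : ℝ, 0 < x → ∀ c : ℝ, 1 < c → φ i (c * x) ≤ c ^ α * φ i x) ∨
          AntitoneOn (φ i) (Ioi 0)) →
        ∀ u : Fin k → ℝ,
          (∀ i, 0 < u i ∧ u i = φ i (u i) ∧ ∀ v : ℝ, 0 < v → v = φ i v → v ≤ u i) →
          ∀ ustar : ℝ,
            (0 < ustar ∧ ustar = ∑ i, φ i ustar ∧
              ∀ v : ℝ, 0 < v → v = ∑ i, φ i v → v ≤ ustar) →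
            ustar ≤ C * ∑ i, u i := by
  obtain ⟨hα0, hα1⟩ := hα
  have h1α : (0:ℝ) < 1 - α := by linarith
  refine ⟨max 1 ((k : ℝ) ^ ((1:ℝ)/(1-α))), lt_of_lt_of_le one_pos (le_max_left _ _), ?_⟩
  intro φ hφpos hφcase u hu ustar hstar
  obtain ⟨hus0, husfix, -⟩ := hstar
  set S := ∑ i, u i with hS
  have hSnonneg : 0 ≤ S := Finset.sum_nonneg fun i _ => (hu i).1.le
  by_cases hcase : ustar ≤ S
  · calc ustar ≤ S := hcase
      _ = 1 * S := (one_mul S).symm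
      _ ≤ max 1 ((k : ℝ) ^ ((1:ℝ)/(1-α))) * S := by
          exact mul_le_mul_of_nonneg_right (le_max_left _ _) hSnonneg
  push_neg at hcase
  have huiS : ∀ i, u i ≤ S := fun i =>
    Finset.single_le_sum (fun j _ => (hu j).1.le) (Finset.mem_univ i)
  have hkey : ∀ i, φ i ustar ≤ ustar ^ α * u i ^ (1 - α) := by
    intro i
    have hui := (hu i).1
    have hfix := (hu i).2.1
    have hlt : u i < ustar := lt_of_le_of_lt (huiS i) hcase
    rcases hφcase i with h | h
    · have hc : 1 < ustar / u i := (one_lt_div hui).2 hlt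
      have h2 := h (u i) hui (ustar / u i) hc
      rw [div_mul_cancel₀ _ hui.ne'] at h2
      calc φ i ustar ≤ (ustar / u i) ^ α * φ i (u i) := h2
        _ = (ustar / u i) ^ α * u i := by rw [← hfix]
        _ = ustar ^ α * u i ^ (1 - α) := by
            rw [Real.div_rpow hus0.le hui.le, Real.rpow_sub hui, Real.rpow_one]
            ring
    · have h1 : φ i ustar ≤ φ i (u i) := h (mem_Ioi.2 hui) (mem_Ioi.2 hus0) hlt.le
      rw [← hfix] at h1
      calc φ i ustar ≤ u i := h1
        _ = u i ^ α * u i ^ (1 - α) := by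
            rw [← Real.rpow_add hui]; simp
        _ ≤ ustar ^ α * u i ^ (1 - α) :=
            mul_le_mul_of_nonneg_right
              (Real.rpow_le_rpow hui.le hlt.le hα0.le) (Real.rpow_nonneg hui.le _)
  have hsum2 : ustar ≤ (k : ℝ) * (ustar ^ α * S ^ (1 - α)) := by
    calc ustar = ∑ i, φ i ustar := husfix
      _ ≤ ∑ i, ustar ^ α * u i ^ (1 - α) := Finset.sum_le_sum fun i _ => hkey i
      _ ≤ ∑ _i : Fin k, ustar ^ α * S ^ (1 - α) := by
          refine Finset.sum_le_sum fun i _ => ?_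
          exact mul_le_mul_of_nonneg_left
            (Real.rpow_le_rpow (hu i).1.le (huiS i) h1α.le)
            (Real.rpow_nonneg hus0.le α)
      _ = (k : ℝ) * (ustar ^ α * S ^ (1 - α)) := by
          rw [Finset.sum_const, Finset.card_univ, Fintype.card_fin, nsmul_eq_mul]
  have hpowα : 0 < ustar ^ α := Real.rpow_pos_of_pos hus0 α
  have hstep : ustar ^ (1 - α) ≤ (k : ℝ) * S ^ (1 - α) := by
    have h3 : ustar ^ α * ustar ^ (1 - α) ≤ ustar ^ α * ((k : ℝ) * S ^ (1 - α)) := by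
      rw [← Real.rpow_add hus0]
      simpa [mul_comm, mul_assoc, mul_left_comm] using hsum2
    exact le_of_mul_le_mul_left h3 hpowα
  have hfin : ustar ≤ (k : ℝ) ^ ((1:ℝ)/(1-α)) * S := by
    have h4 := Real.rpow_le_rpow (Real.rpow_nonneg hus0.le _) hstep
      (le_of_lt (by positivity : (0:ℝ) < 1/(1-α)))
    rw [← Real.rpow_mul hus0.le, mul_one_div_cancel h1α.ne', Real.rpow_one,
      Real.mul_rpow (Nat.cast_nonneg k) (Real.rpow_nonneg hSnonneg _),
      ← Real.rpow_mul hSnonneg, mul_one_div_cancel h1α.ne', Real.rpow_one] at h4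
    exact h4
  calc ustar ≤ (k : ℝ) ^ ((1:ℝ)/(1-α)) * S := hfin
    _ ≤ max 1 ((k : ℝ) ^ ((1:ℝ)/(1-α))) * S :=
        mul_le_mul_of_nonneg_right (le_max_right _ _) hSnonneg
end
end

section
/- Let 𝓕 be a totally bounded subset of diameter at most 1 of a metric space. Then for every integer k ≥ 0, N(𝓕, 2^{−k}) ≤ ∏_{i=0}^{k} sup_{f∈𝓕} N(B(f, 2^{1−i}) ∩ 𝓕, 2^{−i}); consequently H(𝓕, 2^{−k}) ≤ Σ_{i=0}^{k} H(𝓕, 2^{1−i}, 2^{−i}). -/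
open Set

noncomputable section

/-- The `ε`-covering number of `F`: the minimal number of closed balls of radius `ε`
with centers in `F` needed to cover `F`. -/
def coveringNum {E : Type*} [PseudoMetricSpace E] (F : Set E) (ε : ℝ) : ℕ :=
  sInf {n : ℕ | ∃ s : Finset E, ↑s ⊆ F ∧ s.card = n ∧ F ⊆ ⋃ c ∈ s, Metric.closedBall c ε}

/-- The `ε`-entropy of `F`. -/
def entropy {E : Type*} [PseudoMetricSpace E] (F : Set E) (ε : ℝ) : ℝ :=
  Real.log (coveringNum F ε)

/-- The local `ε`-entropy of `F` at scale `δ`: `H(F, δ, ε) = sup_{f ∈ F} H(B(f,δ) ∩ F, ε)`. -/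
def locEntropy {E : Type*} [PseudoMetricSpace E] (F : Set E) (δ ε : ℝ) : ℝ :=
  sSup {a : ℝ | ∃ f ∈ F, a = entropy (Metric.closedBall f δ ∩ F) ε}

/-!
Cover `F` at scale `2^{-i}` by `N(F, 2^{-i})` balls centred in `F`. Each of these balls has radius
`2^{-i} = 2^{1-(i+1)}`, so its trace on `F` is covered by at most
`sup_f N(B(f, 2^{1-(i+1)}) ∩ F, 2^{-(i+1)})` balls of radius `2^{-(i+1)}` centred in `F`; this gives
`N(F, 2^{-(i+1)}) ≤ N(F, 2^{-i}) · sup_f N(B(f, 2^{1-(i+1)}) ∩ F, 2^{-(i+1)})`. Since `diam F ≤ 1`,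
the induction starts from `F = B(f, 2) ∩ F`. Taking logarithms gives the entropy bound.
-/

open Metric

namespace Real

lemma log_natCast_le_log_natCast {m n : ℕ} (h : m ≤ n) : log m ≤ log n := by
  rcases m.eq_zero_or_pos with rfl | hm
  · simpa using log_natCast_nonneg n
  · exact log_le_log (by exact_mod_cast hm) (by exact_mod_cast h)

lemma log_natCast_le_sum_log_of_le_prod {ι : Type*} {s : Finset ι} {n : ℕ} {m : ι → ℕ}
    (h : n ≤ ∏ i ∈ s, m i) : log n ≤ ∑ i ∈ s, log (m i) := by
  rcases n.eq_zero_or_pos with rfl | hn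
  · simpa using Finset.sum_nonneg fun i _ => log_natCast_nonneg (m i)
  have hm : ∀ i ∈ s, (m i : ℝ) ≠ 0 := fun i hi =>
    Nat.cast_ne_zero.2 (Finset.prod_ne_zero_iff.1 (hn.trans_le h).ne' i hi)
  rw [← log_prod hm, ← Nat.cast_prod]
  exact log_natCast_le_log_natCast h

end Real

section

variable {E : Type*} [PseudoMetricSpace E] {A F : Set E} {δ ε : ℝ}

lemma coveringNum_empty : coveringNum (∅ : Set E) ε = 0 :=
  Nat.eq_zero_of_le_zero (Nat.sInf_le ⟨∅, by simp, rfl, by simp⟩)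

lemma coveringNum_le_card {s : Finset E} (hsF : ↑s ⊆ F)
    (hcov : F ⊆ ⋃ c ∈ s, closedBall c ε) : coveringNum F ε ≤ s.card :=
  Nat.sInf_le ⟨s, hsF, rfl, hcov⟩

lemma exists_finset_card_eq_coveringNum (hF : TotallyBounded F) (hε : 0 < ε) :
    ∃ s : Finset E, ↑s ⊆ F ∧ s.card = coveringNum F ε ∧ F ⊆ ⋃ c ∈ s, closedBall c ε := by
  obtain ⟨t, htF, ht, hcov⟩ := finite_approx_of_totallyBounded hF ε hε
  have hne : {n : ℕ | ∃ s : Finset E, ↑s ⊆ F ∧ s.card = n ∧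
      F ⊆ ⋃ c ∈ s, closedBall c ε}.Nonempty := by
    refine ⟨_, ht.toFinset, by simpa using htF, rfl, fun x hx => ?_⟩
    obtain ⟨y, hy, hxy⟩ := Set.mem_iUnion₂.1 (hcov hx)
    exact Set.mem_biUnion (ht.mem_toFinset.2 hy) (ball_subset_closedBall hxy)
  exact Nat.sInf_mem hne

/-- Halving the radius pays for moving the centres of a cover into `A`. -/
lemma coveringNum_le_card_of_subset_iUnion_closedBall_half {s : Finset E}
    (hA : A ⊆ ⋃ c ∈ s, closedBall c (ε / 2)) : coveringNum A ε ≤ s.card := by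
  classical
  let s' := s.filter fun c => (closedBall c (ε / 2) ∩ A).Nonempty
  let p : s' → E := fun c => (Finset.mem_filter.1 c.2).2.some
  have hp (c : s') : p c ∈ closedBall (c : E) (ε / 2) ∩ A := (Finset.mem_filter.1 c.2).2.some_mem
  calc coveringNum A ε ≤ (s'.attach.image p).card := by
        refine coveringNum_le_card (fun y hy => ?_) fun x hx => ?_
        · obtain ⟨c, -, rfl⟩ := Finset.mem_image.1 hy
          exact (hp c).2
        obtain ⟨c, hc, hxc⟩ := Set.mem_iUnion₂.1 (hA hx)
        have hc' : c ∈ s' := Finset.mem_filter.2 ⟨hc, x, hxc, hx⟩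
        refine Set.mem_biUnion (Finset.mem_image_of_mem p (Finset.mem_attach _ ⟨c, hc'⟩)) ?_
        have hxc' := mem_closedBall.1 hxc
        have hpc := mem_closedBall.1 (hp ⟨c, hc'⟩).1
        exact mem_closedBall.2 ((dist_triangle_right x _ c).trans (by linarith))
    _ ≤ s'.attach.card := Finset.card_image_le
    _ ≤ s.card := by simpa only [Finset.card_attach] using Finset.card_filter_le _ _

lemma coveringNum_le_coveringNum_half (hF : TotallyBounded F) (hε : 0 < ε) (hAF : A ⊆ F) :
    coveringNum A ε ≤ coveringNum F (ε / 2) := by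
  obtain ⟨s, -, hs, hcov⟩ := exists_finset_card_eq_coveringNum hF (half_pos hε)
  exact hs ▸ coveringNum_le_card_of_subset_iUnion_closedBall_half (hAF.trans hcov)

/-- In `ℕ` an unbounded supremum is `0`; total boundedness of `F` rules this out. -/
def locCoveringNum (F : Set E) (δ ε : ℝ) : ℕ :=
  ⨆ f ∈ F, coveringNum (closedBall f δ ∩ F) ε

lemma bddAbove_range_coveringNum_closedBall_inter (hF : TotallyBounded F) (hε : 0 < ε) :
    BddAbove (Set.range fun f : F => coveringNum (closedBall (f : E) δ ∩ F) ε) :=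
  ⟨coveringNum F (ε / 2), by
    rintro _ ⟨f, rfl⟩
    exact coveringNum_le_coveringNum_half hF hε Set.inter_subset_right⟩

lemma locCoveringNum_eq_iSup (hF : TotallyBounded F) (hε : 0 < ε) :
    locCoveringNum F δ ε = ⨆ f : F, coveringNum (closedBall (f : E) δ ∩ F) ε :=
  (ciSup_subtype_fun (bddAbove_range_coveringNum_closedBall_inter hF hε) (by simp)).symm

lemma coveringNum_closedBall_inter_le_locCoveringNum (hF : TotallyBounded F) (hε : 0 < ε)
    {f : E} (hf : f ∈ F) : coveringNum (closedBall f δ ∩ F) ε ≤ locCoveringNum F δ ε := by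
  rw [locCoveringNum_eq_iSup hF hε]
  exact le_ciSup (bddAbove_range_coveringNum_closedBall_inter hF hε) ⟨f, hf⟩

lemma exists_coveringNum_closedBall_inter_eq_locCoveringNum (hF : TotallyBounded F)
    (hε : 0 < ε) (hne : F.Nonempty) :
    ∃ f ∈ F, coveringNum (closedBall f δ ∩ F) ε = locCoveringNum F δ ε := by
  have := hne.to_subtype
  rw [locCoveringNum_eq_iSup hF hε]
  obtain ⟨f, hf⟩ := exists_eq_ciSup_of_not_isSuccLimit
    (bddAbove_range_coveringNum_closedBall_inter hF hε) Order.not_isSuccLimit_of_isSuccArchimedean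
  exact ⟨f, f.2, hf⟩

lemma coveringNum_le_mul_locCoveringNum (hF : TotallyBounded F) (hδ : 0 < δ) (hε : 0 < ε) :
    coveringNum F ε ≤ coveringNum F δ * locCoveringNum F δ ε := by
  classical
  obtain ⟨s, hsF, hs, hcov⟩ := exists_finset_card_eq_coveringNum hF hδ
  choose t htF ht htcov using fun c : E =>
    exists_finset_card_eq_coveringNum (hF.subset (Set.inter_subset_right (s := closedBall c δ))) hε
  calc coveringNum F ε ≤ (s.biUnion t).card := by
        refine coveringNum_le_card ?_ fun x hx => ?_
        · simpa using fun c _ => (htF c).trans Set.inter_subset_right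
        obtain ⟨c, hc, hxc⟩ := Set.mem_iUnion₂.1 (hcov hx)
        obtain ⟨c', hc', hxc'⟩ := Set.mem_iUnion₂.1 (htcov c ⟨hxc, hx⟩)
        exact Set.mem_biUnion (Finset.mem_biUnion.2 ⟨c, hc, hc'⟩) hxc'
    _ ≤ ∑ c ∈ s, (t c).card := Finset.card_biUnion_le
    _ ≤ ∑ _c ∈ s, locCoveringNum F δ ε := Finset.sum_le_sum fun c hc =>
        (ht c).trans_le (coveringNum_closedBall_inter_le_locCoveringNum hF hε (hsF hc))
    _ = coveringNum F δ * locCoveringNum F δ ε := by rw [Finset.sum_const, smul_eq_mul, hs]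

lemma coveringNum_le_locCoveringNum_of_diam_le (hF : TotallyBounded F) (hε : 0 < ε)
    (hdiam : diam F ≤ δ) : coveringNum F ε ≤ locCoveringNum F δ ε := by
  rcases F.eq_empty_or_nonempty with rfl | ⟨f, hf⟩
  · simp [coveringNum_empty]
  have hball : closedBall f δ ∩ F = F := Set.inter_eq_right.2 fun x hx =>
    mem_closedBall.2 ((dist_le_diam_of_mem hF.isBounded hx hf).trans hdiam)
  calc coveringNum F ε = coveringNum (closedBall f δ ∩ F) ε := by rw [hball]
    _ ≤ locCoveringNum F δ ε := coveringNum_closedBall_inter_le_locCoveringNum hF hε hf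

theorem coveringNum_le_prod_locCoveringNum (hF : TotallyBounded F) {δ ε : ℕ → ℝ}
    (hε : ∀ i, 0 < ε i) (hδε : ∀ i, δ (i + 1) = ε i) (hdiam : diam F ≤ δ 0) (k : ℕ) :
    coveringNum F (ε k) ≤ ∏ i ∈ Finset.range (k + 1), locCoveringNum F (δ i) (ε i) := by
  induction k with
  | zero => simpa using coveringNum_le_locCoveringNum_of_diam_le hF (hε 0) hdiam
  | succ k ih =>
    calc coveringNum F (ε (k + 1))
        ≤ coveringNum F (δ (k + 1)) * locCoveringNum F (δ (k + 1)) (ε (k + 1)) :=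
          coveringNum_le_mul_locCoveringNum hF (hδε k ▸ hε k) (hε (k + 1))
      _ ≤ _ := by
          rw [Finset.prod_range_succ, hδε k]
          exact Nat.mul_le_mul_right _ ih

lemma log_locCoveringNum_le_locEntropy (hF : TotallyBounded F) (hε : 0 < ε) :
    Real.log (locCoveringNum F δ ε) ≤ locEntropy F δ ε := by
  rcases F.eq_empty_or_nonempty with rfl | hne
  · simp [locCoveringNum_eq_iSup hF hε, locEntropy]
  obtain ⟨f, hf, hfeq⟩ := exists_coveringNum_closedBall_inter_eq_locCoveringNum hF hε hne
  refine le_csSup ⟨Real.log (locCoveringNum F δ ε), ?_⟩ ⟨f, hf, by rw [entropy, hfeq]⟩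
  rintro _ ⟨g, hg, rfl⟩
  exact Real.log_natCast_le_log_natCast (coveringNum_closedBall_inter_le_locCoveringNum hF hε hg)

end

/-- For a totally bounded set `F` of diameter at most `1` in a metric
space, `N(F, 2^{-k}) ≤ ∏_{i=0}^{k} sup_{f ∈ F} N(B(f, 2^{1-i}) ∩ F, 2^{-i})`, and
consequently `H(F, 2^{-k}) ≤ ∑_{i=0}^{k} H(F, 2^{1-i}, 2^{-i})`. -/
theorem coveringNum_le_prod_local
    {E : Type*} [MetricSpace E] (F : Set E) (hF : TotallyBounded F)
    (hdiam : Metric.diam F ≤ 1) (k : ℕ) :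
    (coveringNum F ((2 : ℝ) ^ (-(k : ℤ))) ≤
        ∏ i ∈ Finset.range (k + 1),
          (⨆ f ∈ F, coveringNum (Metric.closedBall f ((2 : ℝ) ^ (1 - (i : ℤ))) ∩ F)
            ((2 : ℝ) ^ (-(i : ℤ))))) ∧
      entropy F ((2 : ℝ) ^ (-(k : ℤ))) ≤
        ∑ i ∈ Finset.range (k + 1),
          locEntropy F ((2 : ℝ) ^ (1 - (i : ℤ))) ((2 : ℝ) ^ (-(i : ℤ))) := by
  have hε (i : ℕ) : (0 : ℝ) < 2 ^ (-(i : ℤ)) := by positivity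
  have hδε (i : ℕ) : (2 : ℝ) ^ (1 - ((i + 1 : ℕ) : ℤ)) = 2 ^ (-(i : ℤ)) := by
    congr 1; push_cast; ring
  have hprod : coveringNum F (2 ^ (-(k : ℤ))) ≤ ∏ i ∈ Finset.range (k + 1),
      locCoveringNum F (2 ^ (1 - (i : ℤ))) (2 ^ (-(i : ℤ))) :=
    coveringNum_le_prod_locCoveringNum hF hε hδε (hdiam.trans (by norm_num)) k
  refine ⟨hprod, ?_⟩
  calc entropy F ((2 : ℝ) ^ (-(k : ℤ)))
      ≤ ∑ i ∈ Finset.range (k + 1),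
          Real.log (locCoveringNum F (2 ^ (1 - (i : ℤ))) (2 ^ (-(i : ℤ)))) :=
        Real.log_natCast_le_sum_log_of_le_prod hprod
    _ ≤ _ := Finset.sum_le_sum fun i _ => log_locCoveringNum_le_locEntropy hF (hε i)
end
end
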